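/- arXiv:2209.13030 — 5 statements merged into one kernel-verified Lean document; each statement's English description precedes it below -/
import Mathlib

section
/- For every real number σ > 0, the family of nonnegative real numbers (a² + b² + c²)^{(3/2)(1 − σ)} / P(a,b,c), indexed by triples of integers (a,b,c) with gcd(a,b,c) = 1, is summable, and its sum is positive. -/
set_option maxHeartbeats 1000000 in


/-- For every `σ > 0`, the family `(a² + b² + c²)^{(3/2)(1−σ)} / P(a,b,c)`, indexed by the
triples of integers `(a,b,c)` with `gcd(a,b,c) = 1`, is summable, and its sum is positive.
Here `P(a,b,c) = a⁶ + 2a⁴b² + 2a⁴c² + 2a²b⁴ + 5a²b²c² + 2a²c⁴ + b⁶ + 2b⁴c² + 2b²c⁴ + c⁶`. -/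
theorem summable_primitive_family (σ : ℝ) (hσ : 0 < σ) :
    Summable (fun p : {v : ℤ × ℤ × ℤ // Int.gcd (Int.gcd v.1 v.2.1) v.2.2 = 1} =>
      ((p.1.1 : ℝ) ^ 2 + (p.1.2.1 : ℝ) ^ 2 + (p.1.2.2 : ℝ) ^ 2) ^ ((3 / 2 : ℝ) * (1 - σ)) /
        ((p.1.1 : ℝ) ^ 6 + 2 * (p.1.1 : ℝ) ^ 4 * (p.1.2.1 : ℝ) ^ 2 +
          2 * (p.1.1 : ℝ) ^ 4 * (p.1.2.2 : ℝ) ^ 2 +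
          2 * (p.1.1 : ℝ) ^ 2 * (p.1.2.1 : ℝ) ^ 4 +
          5 * (p.1.1 : ℝ) ^ 2 * (p.1.2.1 : ℝ) ^ 2 * (p.1.2.2 : ℝ) ^ 2 +
          2 * (p.1.1 : ℝ) ^ 2 * (p.1.2.2 : ℝ) ^ 4 + (p.1.2.1 : ℝ) ^ 6 +
          2 * (p.1.2.1 : ℝ) ^ 4 * (p.1.2.2 : ℝ) ^ 2 +
          2 * (p.1.2.1 : ℝ) ^ 2 * (p.1.2.2 : ℝ) ^ 4 + (p.1.2.2 : ℝ) ^ 6)) ∧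
    0 < ∑' p : {v : ℤ × ℤ × ℤ // Int.gcd (Int.gcd v.1 v.2.1) v.2.2 = 1},
      ((p.1.1 : ℝ) ^ 2 + (p.1.2.1 : ℝ) ^ 2 + (p.1.2.2 : ℝ) ^ 2) ^ ((3 / 2 : ℝ) * (1 - σ)) /
        ((p.1.1 : ℝ) ^ 6 + 2 * (p.1.1 : ℝ) ^ 4 * (p.1.2.1 : ℝ) ^ 2 +
          2 * (p.1.1 : ℝ) ^ 4 * (p.1.2.2 : ℝ) ^ 2 +
          2 * (p.1.1 : ℝ) ^ 2 * (p.1.2.1 : ℝ) ^ 4 +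
          5 * (p.1.1 : ℝ) ^ 2 * (p.1.2.1 : ℝ) ^ 2 * (p.1.2.2 : ℝ) ^ 2 +
          2 * (p.1.1 : ℝ) ^ 2 * (p.1.2.2 : ℝ) ^ 4 + (p.1.2.1 : ℝ) ^ 6 +
          2 * (p.1.2.1 : ℝ) ^ 4 * (p.1.2.2 : ℝ) ^ 2 +
          2 * (p.1.2.1 : ℝ) ^ 2 * (p.1.2.2 : ℝ) ^ 4 + (p.1.2.2 : ℝ) ^ 6) := by
  set t : ℝ := (1 + σ) / 2 with ht_def
  have ht0 : 0 < t := by positivity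
  have ht1 : (1 : ℝ) / 2 < t := by rw [ht_def]; linarith
  set h : ℤ → ℝ := fun n => ((1 : ℝ) + (n : ℝ) ^ 2) ^ (-t) with hh
  have hpos : ∀ n : ℤ, 0 < h n := fun n => Real.rpow_pos_of_pos (by positivity) _
  -- summability of the 1D comparison function
  have key : Summable (fun n : ℕ => ((1 : ℝ) + (n : ℝ) ^ 2) ^ (-t)) := by
    refine Summable.of_norm_bounded_eventually_nat (g := fun n : ℕ => (n : ℝ) ^ (-(2 * t)))
      (Real.summable_nat_rpow.mpr (by linarith)) ?_
    filter_upwards [Filter.eventually_gt_atTop 0] with n hn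
    rw [Real.norm_of_nonneg (Real.rpow_nonneg (by positivity) _)]
    have h2 : (0 : ℝ) < (n : ℝ) ^ 2 := by positivity
    calc ((1 : ℝ) + (n : ℝ) ^ 2) ^ (-t) ≤ ((n : ℝ) ^ 2) ^ (-t) :=
          Real.rpow_le_rpow_of_nonpos h2 (by linarith) (by linarith)
      _ = (n : ℝ) ^ (-(2 * t)) := by
          rw [← Real.rpow_natCast (n : ℝ) 2, ← Real.rpow_mul (Nat.cast_nonneg n)]
          norm_num
  have hsumh : Summable h := by
    rw [summable_int_iff_summable_nat_and_neg]
    constructor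
    · exact key.congr fun n => by simp [hh]
    · exact key.congr fun n => by simp [hh]
  have hF : Summable (fun v : ℤ × ℤ × ℤ => h v.1 * (h v.2.1 * h v.2.2)) :=
    hsumh.mul_of_nonneg
      (hsumh.mul_of_nonneg hsumh (fun n => (hpos n).le) (fun n => (hpos n).le))
      (fun n => (hpos n).le) (fun v => mul_nonneg (hpos _).le (hpos _).le)
  set C : ℝ := 3 / 2 * (8 : ℝ) ^ t with hC
  have hCpos : 0 < C := by positivity
  have hG : Summable (fun p : {v : ℤ × ℤ × ℤ // Int.gcd (Int.gcd v.1 v.2.1) v.2.2 = 1} =>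
      C * (h p.1.1 * (h p.1.2.1 * h p.1.2.2))) :=
    (hF.mul_left C).comp_injective Subtype.val_injective
  -- nonnegativity of the terms
  have hnonneg : ∀ p : {v : ℤ × ℤ × ℤ // Int.gcd (Int.gcd v.1 v.2.1) v.2.2 = 1},
      0 ≤ ((p.1.1 : ℝ) ^ 2 + (p.1.2.1 : ℝ) ^ 2 + (p.1.2.2 : ℝ) ^ 2) ^ ((3 / 2 : ℝ) * (1 - σ)) /
        ((p.1.1 : ℝ) ^ 6 + 2 * (p.1.1 : ℝ) ^ 4 * (p.1.2.1 : ℝ) ^ 2 +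
          2 * (p.1.1 : ℝ) ^ 4 * (p.1.2.2 : ℝ) ^ 2 +
          2 * (p.1.1 : ℝ) ^ 2 * (p.1.2.1 : ℝ) ^ 4 +
          5 * (p.1.1 : ℝ) ^ 2 * (p.1.2.1 : ℝ) ^ 2 * (p.1.2.2 : ℝ) ^ 2 +
          2 * (p.1.1 : ℝ) ^ 2 * (p.1.2.2 : ℝ) ^ 4 + (p.1.2.1 : ℝ) ^ 6 +
          2 * (p.1.2.1 : ℝ) ^ 4 * (p.1.2.2 : ℝ) ^ 2 +
          2 * (p.1.2.1 : ℝ) ^ 2 * (p.1.2.2 : ℝ) ^ 4 + (p.1.2.2 : ℝ) ^ 6) := by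
    intro p
    apply div_nonneg (Real.rpow_nonneg (by positivity) _)
    positivity
  -- the comparison bound
  have hbound : ∀ p : {v : ℤ × ℤ × ℤ // Int.gcd (Int.gcd v.1 v.2.1) v.2.2 = 1},
      ((p.1.1 : ℝ) ^ 2 + (p.1.2.1 : ℝ) ^ 2 + (p.1.2.2 : ℝ) ^ 2) ^ ((3 / 2 : ℝ) * (1 - σ)) /
        ((p.1.1 : ℝ) ^ 6 + 2 * (p.1.1 : ℝ) ^ 4 * (p.1.2.1 : ℝ) ^ 2 +
          2 * (p.1.1 : ℝ) ^ 4 * (p.1.2.2 : ℝ) ^ 2 +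
          2 * (p.1.1 : ℝ) ^ 2 * (p.1.2.1 : ℝ) ^ 4 +
          5 * (p.1.1 : ℝ) ^ 2 * (p.1.2.1 : ℝ) ^ 2 * (p.1.2.2 : ℝ) ^ 2 +
          2 * (p.1.1 : ℝ) ^ 2 * (p.1.2.2 : ℝ) ^ 4 + (p.1.2.1 : ℝ) ^ 6 +
          2 * (p.1.2.1 : ℝ) ^ 4 * (p.1.2.2 : ℝ) ^ 2 +
          2 * (p.1.2.1 : ℝ) ^ 2 * (p.1.2.2 : ℝ) ^ 4 + (p.1.2.2 : ℝ) ^ 6)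
      ≤ C * (h p.1.1 * (h p.1.2.1 * h p.1.2.2)) := by
    rintro ⟨⟨a, b, c⟩, hg⟩
    have hvz : ¬(a = 0 ∧ b = 0 ∧ c = 0) := by
      rintro ⟨rfl, rfl, rfl⟩; simp at hg
    have hqz : (1 : ℤ) ≤ a ^ 2 + b ^ 2 + c ^ 2 := by
      rcases lt_or_ge 0 (a ^ 2 + b ^ 2 + c ^ 2) with hlt | hle
      · omega
      · exfalso; apply hvz
        refine ⟨?_, ?_, ?_⟩ <;> nlinarith [sq_nonneg a, sq_nonneg b, sq_nonneg c]
    set A : ℝ := (a : ℝ)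
    set B : ℝ := (b : ℝ)
    set D : ℝ := (c : ℝ)
    have hq : (1 : ℝ) ≤ A ^ 2 + B ^ 2 + D ^ 2 := by
      show (1 : ℝ) ≤ (a : ℝ) ^ 2 + (b : ℝ) ^ 2 + (c : ℝ) ^ 2
      exact_mod_cast hqz
    set q : ℝ := A ^ 2 + B ^ 2 + D ^ 2 with hqdef
    have hq0 : 0 < q := by linarith
    set P : ℝ := A ^ 6 + 2 * A ^ 4 * B ^ 2 + 2 * A ^ 4 * D ^ 2 + 2 * A ^ 2 * B ^ 4 +
      5 * A ^ 2 * B ^ 2 * D ^ 2 + 2 * A ^ 2 * D ^ 4 + B ^ 6 + 2 * B ^ 4 * D ^ 2 +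
      2 * B ^ 2 * D ^ 4 + D ^ 6 with hPdef
    have hP23 : 2 / 3 * q ^ 3 ≤ P := by
      rw [hPdef, hqdef]
      nlinarith [sq_nonneg (A ^ 3), sq_nonneg (B ^ 3), sq_nonneg (D ^ 3),
        sq_nonneg (A * B * D)]
    have hPpos : 0 < P := lt_of_lt_of_le (by positivity) hP23
    have step1 : q ^ ((3 / 2 : ℝ) * (1 - σ)) / P
        ≤ q ^ ((3 / 2 : ℝ) * (1 - σ)) / (2 / 3 * q ^ 3) := by
      gcongr
    have step2 : q ^ ((3 / 2 : ℝ) * (1 - σ)) / (2 / 3 * q ^ 3)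
        = 3 / 2 * q ^ (-(3 * t)) := by
      have h3q : q ^ (3 : ℕ) ≠ 0 := by positivity
      have e0 : q ^ ((3 / 2 : ℝ) * (1 - σ)) = q ^ (-(3 * t)) * q ^ (3 : ℕ) := by
        rw [← Real.rpow_natCast q 3, ← Real.rpow_add hq0]
        congr 1
        rw [ht_def]; push_cast; ring
      rw [e0]
      field_simp
    have h1 : 1 + A ^ 2 ≤ 2 * q := by nlinarith [sq_nonneg B, sq_nonneg D]
    have h2 : 1 + B ^ 2 ≤ 2 * q := by nlinarith [sq_nonneg A, sq_nonneg D]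
    have h3 : 1 + D ^ 2 ≤ 2 * q := by nlinarith [sq_nonneg A, sq_nonneg B]
    have hprod : (1 + A ^ 2) * ((1 + B ^ 2) * (1 + D ^ 2)) ≤ 8 * q ^ 3 := by
      calc (1 + A ^ 2) * ((1 + B ^ 2) * (1 + D ^ 2))
          ≤ (2 * q) * ((2 * q) * (2 * q)) := by
            apply mul_le_mul h1 (mul_le_mul h2 h3 (by positivity) (by linarith))
              (by positivity) (by linarith)
        _ = 8 * q ^ 3 := by ring
    have step3 : q ^ (-(3 * t)) ≤ (8 : ℝ) ^ t * (h a * (h b * h c)) := by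
      have e1 : q ^ (-(3 * t)) = (q ^ (3 : ℕ)) ^ (-t) := by
        rw [← Real.rpow_natCast q 3, ← Real.rpow_mul hq0.le]
        norm_num
      have e2 : ((8 : ℝ) * q ^ 3) ^ (-t)
          ≤ ((1 + A ^ 2) * ((1 + B ^ 2) * (1 + D ^ 2))) ^ (-t) :=
        Real.rpow_le_rpow_of_nonpos (by positivity) hprod (by linarith)
      have e3 : ((8 : ℝ) * q ^ 3) ^ (-t) = (8 : ℝ) ^ (-t) * (q ^ (3 : ℕ)) ^ (-t) := by
        rw [Real.mul_rpow (by norm_num) (by positivity)]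
      have e4 : ((1 + A ^ 2) * ((1 + B ^ 2) * (1 + D ^ 2))) ^ (-t)
          = h a * (h b * h c) := by
        rw [Real.mul_rpow (by positivity) (by positivity),
          Real.mul_rpow (by positivity) (by positivity)]
      have e5 : (8 : ℝ) ^ t * (8 : ℝ) ^ (-t) = 1 := by
        rw [← Real.rpow_add (by norm_num)]; norm_num
      calc q ^ (-(3 * t)) = (8 : ℝ) ^ t * ((8 : ℝ) ^ (-t) * (q ^ (3 : ℕ)) ^ (-t)) := by
            rw [e1, ← mul_assoc, e5, one_mul]
        _ = (8 : ℝ) ^ t * ((8 : ℝ) * q ^ 3) ^ (-t) := by rw [e3]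
        _ ≤ (8 : ℝ) ^ t * ((1 + A ^ 2) * ((1 + B ^ 2) * (1 + D ^ 2))) ^ (-t) := by
            have : (0 : ℝ) < (8 : ℝ) ^ t := by positivity
            nlinarith [e2]
        _ = (8 : ℝ) ^ t * (h a * (h b * h c)) := by rw [e4]
    calc q ^ ((3 / 2 : ℝ) * (1 - σ)) / P
        ≤ q ^ ((3 / 2 : ℝ) * (1 - σ)) / (2 / 3 * q ^ 3) := step1
      _ = 3 / 2 * q ^ (-(3 * t)) := step2
      _ ≤ 3 / 2 * ((8 : ℝ) ^ t * (h a * (h b * h c))) := by linarith [step3]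
      _ = C * (h a * (h b * h c)) := by rw [hC]; ring
  have hs : Summable (fun p : {v : ℤ × ℤ × ℤ // Int.gcd (Int.gcd v.1 v.2.1) v.2.2 = 1} =>
      ((p.1.1 : ℝ) ^ 2 + (p.1.2.1 : ℝ) ^ 2 + (p.1.2.2 : ℝ) ^ 2) ^ ((3 / 2 : ℝ) * (1 - σ)) /
        ((p.1.1 : ℝ) ^ 6 + 2 * (p.1.1 : ℝ) ^ 4 * (p.1.2.1 : ℝ) ^ 2 +
          2 * (p.1.1 : ℝ) ^ 4 * (p.1.2.2 : ℝ) ^ 2 +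
          2 * (p.1.1 : ℝ) ^ 2 * (p.1.2.1 : ℝ) ^ 4 +
          5 * (p.1.1 : ℝ) ^ 2 * (p.1.2.1 : ℝ) ^ 2 * (p.1.2.2 : ℝ) ^ 2 +
          2 * (p.1.1 : ℝ) ^ 2 * (p.1.2.2 : ℝ) ^ 4 + (p.1.2.1 : ℝ) ^ 6 +
          2 * (p.1.2.1 : ℝ) ^ 4 * (p.1.2.2 : ℝ) ^ 2 +
          2 * (p.1.2.1 : ℝ) ^ 2 * (p.1.2.2 : ℝ) ^ 4 + (p.1.2.2 : ℝ) ^ 6)) :=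
    Summable.of_nonneg_of_le hnonneg hbound hG
  refine ⟨hs, ?_⟩
  have hone : Int.gcd (Int.gcd (1 : ℤ) (0 : ℤ)) (0 : ℤ) = 1 := by decide
  refine Summable.tsum_pos hs hnonneg ⟨((1 : ℤ), (0 : ℤ), (0 : ℤ)), hone⟩ ?_
  norm_num [Real.one_rpow]
end

section
/- Let a, b, c be integers with gcd(a,b,c) = 1. Then the subgroup of ℤ⁶ generated by v1 = (a,b,c,0,0,0), v2 = (0,a,0,b,c,0), v3 = (0,0,a,0,b,c) is a saturated sublattice of rank 3; that is, v1, v2, v3 are ℤ-linearly independent, and whenever x ∈ ℤ⁶ and n is a nonzero integer with n·x in this subgroup, then x itself lies in the subgroup. -/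
private theorem mem_span3 (x v1 v2 v3 : Fin 6 → ℤ) :
    x ∈ Submodule.span ℤ ({v1,v2,v3} : Set (Fin 6 → ℤ)) ↔
      ∃ p q r : ℤ, x = p • v1 + (q • v2 + r • v3) := by
  simp only [Submodule.mem_span_insert, Submodule.mem_span_singleton]
  constructor
  · rintro ⟨p, z, ⟨q, z2, ⟨r, rfl⟩, rfl⟩, rfl⟩; exact ⟨p, q, r, rfl⟩
  · rintro ⟨p, q, r, rfl⟩; exact ⟨p, _, ⟨q, _, ⟨r, rfl⟩, rfl⟩, rfl⟩

private theorem key (a b c u v w p n : ℤ) (h1 : a*u + b*v + c*w = 1)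
    (h2 : n ∣ p*a) (h3 : n ∣ p*b^2) (h4 : n ∣ p*c^2) : n ∣ p := by
  have hp : p = (p*a)*(u*((a*u)^2 + 3*(a*u)*(b*v+c*w) + 3*(b*v+c*w)^2))
      + (p*b^2)*(v^3*b + 3*v^2*w*c) + (p*c^2)*(3*v*w^2*b + w^3*c) := by
    linear_combination (-(p*(1 + (a*u+b*v+c*w) + (a*u+b*v+c*w)^2))) * h1
  rw [hp]
  exact dvd_add (dvd_add (h2.mul_right _) (h3.mul_right _)) (h4.mul_right _)

/-- For integers `a, b, c` with `gcd(a,b,c) = 1`, the subgroup of `ℤ⁶` generated by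
`v1 = (a,b,c,0,0,0)`, `v2 = (0,a,0,b,c,0)`, `v3 = (0,0,a,0,b,c)` is a saturated sublattice of
rank 3: the `vᵢ` are `ℤ`-linearly independent, and if `n • x` lies in the subgroup for some
`x ∈ ℤ⁶` and nonzero integer `n`, then `x` lies in the subgroup. -/
theorem span_mul_saturated (a b c : ℤ) (h : Int.gcd (Int.gcd a b) c = 1) :
    LinearIndependent ℤ
        ![![a, b, c, 0, 0, 0], ![0, a, 0, b, c, 0], ![0, 0, a, 0, b, c]] ∧
      ∀ (x : Fin 6 → ℤ) (n : ℤ), n ≠ 0 →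
        n • x ∈ Submodule.span ℤ
            ({![a, b, c, 0, 0, 0], ![0, a, 0, b, c, 0], ![0, 0, a, 0, b, c]} :
              Set (Fin 6 → ℤ)) →
        x ∈ Submodule.span ℤ
            ({![a, b, c, 0, 0, 0], ![0, a, 0, b, c, 0], ![0, 0, a, 0, b, c]} :
              Set (Fin 6 → ℤ)) := by
  -- Bezout coefficients for gcd(a, b, c) = 1
  obtain ⟨u, v, w, hbez⟩ : ∃ u v w : ℤ, a*u + b*v + c*w = 1 := by
    have h1 := Int.gcd_eq_gcd_ab a b
    have h2 := Int.gcd_eq_gcd_ab (Int.gcd a b : ℤ) c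
    rw [h] at h2
    push_cast at h2
    exact ⟨Int.gcdA a b * Int.gcdA (Int.gcd a b : ℤ) c,
      Int.gcdB a b * Int.gcdA (Int.gcd a b : ℤ) c,
      Int.gcdB (Int.gcd a b : ℤ) c,
      by linear_combination (-(Int.gcdA (Int.gcd a b : ℤ) c)) * h1 - h2⟩
  constructor
  · rw [Fintype.linearIndependent_iff]
    intro g hg
    simp only [Fin.sum_univ_three] at hg
    have e0 := congrFun hg 0
    have e1 := congrFun hg 1
    have e2 := congrFun hg 2
    have e3 := congrFun hg 3
    have e4 := congrFun hg 4
    have e5 := congrFun hg 5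
    simp [show (5:Fin 6) = Fin.succ 4 from rfl, Matrix.cons_val_succ, -mul_eq_zero]
      at e0 e1 e2 e3 e4 e5
    have hp : (0:ℤ) ∣ g 0 := key a b c u v w (g 0) 0 hbez
      (zero_dvd_iff.mpr (by linear_combination e0))
      (zero_dvd_iff.mpr (by linear_combination b*e1 - a*e3))
      (zero_dvd_iff.mpr (by linear_combination c*e2 - a*e5))
    have hq : (0:ℤ) ∣ g 1 := key b a c v u w (g 1) 0 (by linear_combination hbez)
      (zero_dvd_iff.mpr (by linear_combination e3))
      (zero_dvd_iff.mpr (by linear_combination a*e1 - b*e0))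
      (zero_dvd_iff.mpr (by linear_combination c*e4 - b*e5))
    have hr : (0:ℤ) ∣ g 2 := key c a b w u v (g 2) 0 (by linear_combination hbez)
      (zero_dvd_iff.mpr (by linear_combination e5))
      (zero_dvd_iff.mpr (by linear_combination a*e2 - c*e0))
      (zero_dvd_iff.mpr (by linear_combination b*e4 - c*e3))
    intro i
    fin_cases i
    · exact zero_dvd_iff.mp hp
    · exact zero_dvd_iff.mp hq
    · exact zero_dvd_iff.mp hr
  · intro x n hn hmem
    rw [mem_span3] at hmem ⊢
    obtain ⟨p, q, r, hx⟩ := hmem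
    have e0 := congrFun hx 0
    have e1 := congrFun hx 1
    have e2 := congrFun hx 2
    have e3 := congrFun hx 3
    have e4 := congrFun hx 4
    have e5 := congrFun hx 5
    simp [show (5:Fin 6) = Fin.succ 4 from rfl, Matrix.cons_val_succ] at e0 e1 e2 e3 e4 e5
    replace e5 : n * x 5 = r * c := e5
    have hp : n ∣ p := key a b c u v w p n hbez
      ⟨x 0, by linear_combination -e0⟩
      ⟨x 1 * b - x 3 * a, by linear_combination -b*e1 + a*e3⟩
      ⟨x 2 * c - x 5 * a, by linear_combination -c*e2 + a*e5⟩
    have hq : n ∣ q := key b a c v u w q n (by linear_combination hbez)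
      ⟨x 3, by linear_combination -e3⟩
      ⟨x 1 * a - x 0 * b, by linear_combination -a*e1 + b*e0⟩
      ⟨x 4 * c - x 5 * b, by linear_combination -c*e4 + b*e5⟩
    have hr : n ∣ r := key c a b w u v r n (by linear_combination hbez)
      ⟨x 5, by linear_combination -e5⟩
      ⟨x 2 * a - x 0 * c, by linear_combination -a*e2 + c*e0⟩
      ⟨x 4 * b - x 3 * c, by linear_combination -b*e4 + c*e3⟩
    obtain ⟨p', rfl⟩ := hp
    obtain ⟨q', rfl⟩ := hq
    obtain ⟨r', rfl⟩ := hr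
    refine ⟨p', q', r', smul_right_injective (Fin 6 → ℤ) hn (hx.trans ?_)⟩
    simp [smul_add, smul_smul]
    refine ⟨?_, ?_, ?_, ?_, ?_, ?_⟩ <;> ring
end

section
/- Let k be a field, let ℓ ∈ k[X0, X1, X2] be a nonzero homogeneous polynomial of degree 1, and let q ∈ k[X0, X1, X2] be a homogeneous polynomial of degree 2 that is not a multiple of ℓ. Let I be the ideal of k[X0, X1, X2] generated by ℓ and q. Then for every integer d ≥ 1, the k-vector space of homogeneous degree-d elements of I has dimension binom(d+2, 2) − 2; that is, it has codimension 2 in the space of all homogeneous polynomials of degree d. -/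
open MvPolynomial Finsupp Module


lemma IGD_choose_step (t : ℕ) : (t + 3).choose 2 = (t + 2).choose 2 + (t + 2) := by
  show Nat.choose ((t + 2) + 1) (1 + 1) = _
  rw [Nat.choose_succ_succ, Nat.choose_one_right, Nat.add_comm]

lemma IGD_degree_single {σ : Type*} (i : σ) (n : ℕ) : (Finsupp.single i n).degree = n := by
  classical
  rcases eq_or_ne n 0 with rfl | hn
  · simp [Finsupp.degree]
  · rw [Finsupp.degree_apply, Finsupp.support_single_ne_zero _ hn]
    simp

lemma IGD_single_of_degree_one {σ : Type*} [DecidableEq σ] {d : σ →₀ ℕ} (h : d.degree = 1) :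
    ∃ i, d = Finsupp.single i 1 := by
  have hc : Multiset.card d.toMultiset = 1 := by
    rw [Finsupp.card_toMultiset]
    simpa [Finsupp.degree_apply, Finsupp.sum] using h
  obtain ⟨a, ha⟩ := Multiset.card_eq_one.mp hc
  refine ⟨a, ?_⟩
  have h2 := Finsupp.toMultiset_toFinsupp d
  rw [ha, Multiset.toFinsupp_singleton] at h2
  exact h2.symm

lemma IGD_expand {k : Type*} [Field k] {ℓ : MvPolynomial (Fin 3) k}
    (hℓ : ℓ.IsHomogeneous 1) :
    ℓ = ∑ i : Fin 3, C (coeff (Finsupp.single i 1) ℓ) * X i := by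
  apply MvPolynomial.ext
  intro d
  rw [coeff_sum]
  simp only [coeff_C_mul, coeff_X']
  by_cases hd : d.degree = 1
  · obtain ⟨i₀, rfl⟩ := IGD_single_of_degree_one hd
    rw [Finset.sum_eq_single i₀]
    · simp
    · intro b _ hb
      rw [if_neg, mul_zero]
      exact fun hsi => hb (by simpa [Finsupp.single_left_inj (α := Fin 3) one_ne_zero] using hsi)
    · simp
  · rw [hℓ.coeff_eq_zero hd, Finset.sum_eq_zero]
    intro i _
    rw [if_neg, mul_zero]
    intro hsi
    exact hd (by rw [← hsi, IGD_degree_single])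

lemma IGD_prime_X (k : Type*) [Field k] (j : Fin 3) : Prime (X j : MvPolynomial (Fin 3) k) := by
  let e := (renameEquiv k (Equiv.swap j 0)).trans (MvPolynomial.finSuccEquiv k 2)
  rw [← MulEquiv.prime_iff (e : MvPolynomial (Fin 3) k ≃* Polynomial (MvPolynomial (Fin 2) k))]
  have : e (X j) = Polynomial.X := by
    show (MvPolynomial.finSuccEquiv k 2) ((renameEquiv k (Equiv.swap j 0)) (X j)) = _
    rw [renameEquiv_apply, rename_X, Equiv.swap_apply_left, finSuccEquiv_X_zero]
  rw [show ((e : MvPolynomial (Fin 3) k ≃* _) (X j)) = e (X j) from rfl, this]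
  exact Polynomial.prime_X

lemma IGD_prime {k : Type*} [Field k] {ℓ : MvPolynomial (Fin 3) k}
    (hℓ : ℓ.IsHomogeneous 1) (h0 : ℓ ≠ 0) : Prime ℓ := by
  classical
  set c : Fin 3 → k := fun i => coeff (Finsupp.single i 1) ℓ with hc
  have hexp : ℓ = ∑ i : Fin 3, C (c i) * X i := IGD_expand hℓ
  have hj : ∃ j, c j ≠ 0 := by
    by_contra h
    push_neg at h
    exact h0 (by rw [hexp]; simp [h])
  obtain ⟨j, hcj⟩ := hj
  set s : MvPolynomial (Fin 3) k := ∑ i ∈ Finset.univ.erase j, C (c i) * X i with hs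
  have hsplit : ℓ = C (c j) * X j + s := by
    rw [hexp, hs]
    exact (Finset.add_sum_erase _ _ (Finset.mem_univ j)).symm
  set w : MvPolynomial (Fin 3) k := C (c j)⁻¹ * (X j - s) with hw
  let φ : MvPolynomial (Fin 3) k →ₐ[k] MvPolynomial (Fin 3) k :=
    aeval (fun i => if i = j then w else X i)
  let ψ : MvPolynomial (Fin 3) k →ₐ[k] MvPolynomial (Fin 3) k :=
    aeval (fun i => if i = j then ℓ else X i)
  have hfix : ∀ (f : MvPolynomial (Fin 3) k →ₐ[k] MvPolynomial (Fin 3) k),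
      (∀ i ≠ j, f (X i) = X i) → f s = s := by
    intro f hf
    rw [hs, map_sum]
    refine Finset.sum_congr rfl fun i hi => ?_
    rw [map_mul, hf i (Finset.ne_of_mem_erase hi)]
    congr 1
    exact f.commutes' (c i)
  have hφs : φ s = s := hfix φ (fun i hi => by simp [φ, hi])
  have hψs : ψ s = s := hfix ψ (fun i hi => by simp [ψ, hi])
  have hCC : (C (c j) : MvPolynomial (Fin 3) k) * C (c j)⁻¹ = 1 := by
    rw [← C_mul, mul_inv_cancel₀ hcj, C_1]
  have hφX : φ (X j) = w := by simp [φ]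
  have hψX : ψ (X j) = ℓ := by simp [ψ]
  have hφC : ∀ r : k, φ (C r) = C r := fun r => φ.commutes' r
  have hψC : ∀ r : k, ψ (C r) = C r := fun r => ψ.commutes' r
  have hψφ : ψ.comp φ = AlgHom.id k _ := by
    apply MvPolynomial.algHom_ext
    intro i
    by_cases hi : i = j
    · subst hi
      rw [AlgHom.comp_apply, AlgHom.id_apply, hφX, hw, map_mul, map_sub, hψX, hψs, hψC,
        hsplit]
      ring_nf
      rw [← C_mul, inv_mul_cancel₀ hcj, C_1, one_mul]
    · simp [φ, ψ, AlgHom.comp_apply, aeval_X, hi]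
  have hφψ : φ.comp ψ = AlgHom.id k _ := by
    apply MvPolynomial.algHom_ext
    intro i
    by_cases hi : i = j
    · subst hi
      rw [AlgHom.comp_apply, AlgHom.id_apply, hψX, hsplit, map_add, map_mul, hφX, hφs, hφC,
        hw, ← mul_assoc, hCC, one_mul]
      ring
    · simp [φ, ψ, AlgHom.comp_apply, aeval_X, hi]
  let E : MvPolynomial (Fin 3) k ≃ₐ[k] MvPolynomial (Fin 3) k :=
    AlgEquiv.ofAlgHom ψ φ hψφ hφψ
  have hE : E (X j) = ℓ := hψX
  have := (MulEquiv.prime_iff E.toMulEquiv).mpr (IGD_prime_X k j)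
  rwa [show E.toMulEquiv (X j) = E (X j) from rfl, hE] at this

lemma IGD_hc_mul {k : Type*} [CommRing k] {p : MvPolynomial (Fin 3) k} {m : ℕ}
    (hp : p.IsHomogeneous m) (a : MvPolynomial (Fin 3) k) {n : ℕ} (h : m ≤ n) :
    homogeneousComponent n (a * p) = homogeneousComponent (n - m) a * p := by
  conv_lhs => rw [← sum_homogeneousComponent a]
  rw [Finset.sum_mul, map_sum]
  have key : ∀ i, homogeneousComponent n (homogeneousComponent i a * p)
      = if i = n - m then homogeneousComponent i a * p else 0 := by
    intro i
    rw [homogeneousComponent_of_mem ((homogeneousComponent_isHomogeneous i a).mul hp)]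
    by_cases hi : i = n - m
    · rw [if_pos hi, if_pos, hi]
      omega
    · rw [if_neg, if_neg hi]
      omega
  simp_rw [key]
  rw [Finset.sum_ite_eq' (Finset.range (a.totalDegree + 1))]
  split_ifs with hmem
  · rfl
  · rw [homogeneousComponent_eq_zero, zero_mul]
    simp only [Finset.mem_range] at hmem
    omega

lemma IGD_hc_mul_zero {k : Type*} [CommRing k] {p : MvPolynomial (Fin 3) k} {m : ℕ}
    (hp : p.IsHomogeneous m) (a : MvPolynomial (Fin 3) k) {n : ℕ} (h : n < m) :
    homogeneousComponent n (a * p) = 0 := by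
  conv_lhs => rw [← sum_homogeneousComponent a]
  rw [Finset.sum_mul, map_sum]
  apply Finset.sum_eq_zero
  intro i _
  rw [homogeneousComponent_of_mem ((homogeneousComponent_isHomogeneous i a).mul hp), if_neg]
  omega

noncomputable def IGD_symEquiv (n : ℕ) :
    Sym (Fin 3) n ≃ {d : Fin 3 →₀ ℕ // d.degree = n} :=
  (Sym.equivNatSum (Fin 3) n).trans <| Equiv.subtypeEquiv (Equiv.refl _) <| by
    intro P
    simp [Finsupp.degree_apply, Finsupp.sum, Equiv.refl]

noncomputable instance (n : ℕ) : Fintype {d : Fin 3 →₀ ℕ // d.degree = n} :=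
  Fintype.ofEquiv _ (IGD_symEquiv n)

lemma IGD_card (n : ℕ) : Fintype.card {d : Fin 3 →₀ ℕ // d.degree = n} = (n + 2).choose 2 := by
  rw [← Fintype.card_congr (IGD_symEquiv n), Sym.card_sym_eq_choose]
  have h3 : Fintype.card (Fin 3) = 3 := by simp
  rw [h3, show 3 + n - 1 = n + 2 by omega]
  calc (n + 2).choose n = (n + 2).choose (n + 2 - 2) := by congr 1
    _ = (n + 2).choose 2 := Nat.choose_symm (by omega)

noncomputable def IGD_linEquiv (k : Type*) [Field k] (n : ℕ) :
    (homogeneousSubmodule (Fin 3) k n) ≃ₗ[k] ({d : Fin 3 →₀ ℕ // d.degree = n} →₀ k) :=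
  (LinearEquiv.ofEq _ _ (homogeneousSubmodule_eq_finsupp_supported (σ := Fin 3) (R := k) n)).trans
    (AddMonoidAlgebra.supportedEquivFinsupp _)

instance IGD_fd (k : Type*) [Field k] (n : ℕ) :
    FiniteDimensional k (homogeneousSubmodule (Fin 3) k n) :=
  Module.Finite.equiv (IGD_linEquiv k n).symm

lemma IGD_finrank (k : Type*) [Field k] (n : ℕ) :
    finrank k (homogeneousSubmodule (Fin 3) k n) = (n + 2).choose 2 := by
  rw [(IGD_linEquiv k n).finrank_eq, finrank_finsupp_self, IGD_card]

/-- Let `k` be a field, `ℓ` a nonzero homogeneous polynomial of degree 1 in `k[X0,X1,X2]`,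
and `q` a homogeneous polynomial of degree 2 that is not a multiple of `ℓ`.  Let `I` be the
ideal generated by `ℓ` and `q`.  Then for every `d ≥ 1`, the `k`-vector space of homogeneous
degree-`d` elements of `I` has dimension `choose (d+2) 2 − 2`, i.e. codimension 2 in the
space of all homogeneous polynomials of degree `d`. -/
theorem ideal_graded_dim (k : Type*) [Field k]
    (ℓ q : MvPolynomial (Fin 3) k)
    (hℓ : ℓ.IsHomogeneous 1) (hℓ0 : ℓ ≠ 0)
    (hq : q.IsHomogeneous 2) (hqℓ : ∀ r : MvPolynomial (Fin 3) k, q ≠ r * ℓ)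
    (d : ℕ) (hd : 1 ≤ d) :
    Module.finrank k
        ↥((Ideal.span {ℓ, q}).restrictScalars k ⊓ homogeneousSubmodule (Fin 3) k d) =
      Nat.choose (d + 2) 2 - 2 := by
  have hℓI : ℓ ∈ Ideal.span {ℓ, q} := Ideal.subset_span (by simp)
  have hqI : q ∈ Ideal.span {ℓ, q} := Ideal.subset_span (by simp)
  have hq0 : q ≠ 0 := fun h => hqℓ 0 (by simp [h])
  rcases eq_or_lt_of_le hd with h1 | h2
  · -- d = 1
    subst h1
    have heq : (Ideal.span {ℓ, q}).restrictScalars k ⊓ homogeneousSubmodule (Fin 3) k 1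
        = Submodule.span k {ℓ} := by
      apply le_antisymm
      · rintro x hx
        obtain ⟨hxI, hxH⟩ := Submodule.mem_inf.mp hx
        obtain ⟨a, b, hab⟩ := Ideal.mem_span_pair.mp hxI
        have hx1 : homogeneousComponent 1 x = x := by
          rw [homogeneousComponent_of_mem hxH, if_pos rfl]
        have hx2 : x = coeff 0 a • ℓ := by
          conv_lhs => rw [← hx1, ← hab]
          rw [map_add, IGD_hc_mul hℓ a (le_refl 1), IGD_hc_mul_zero hq b (by omega), add_zero,
            show (1 : ℕ) - 1 = 0 from rfl, homogeneousComponent_zero, C_mul']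
        rw [hx2]
        exact Submodule.smul_mem _ _ (Submodule.mem_span_singleton_self ℓ)
      · rw [Submodule.span_le, Set.singleton_subset_iff]
        exact Submodule.mem_inf.mpr ⟨hℓI, hℓ⟩
    rw [heq, finrank_span_singleton hℓ0]
    decide
  · -- d ≥ 2
    obtain ⟨m, rfl⟩ : ∃ m, d = m + 2 := ⟨d - 2, by omega⟩
    -- the multiplication map
    set H1 := homogeneousSubmodule (Fin 3) k (m + 1)
    set H0 := homogeneousSubmodule (Fin 3) k m
    let φ : (H1 × H0) →ₗ[k] MvPolynomial (Fin 3) k :=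
      ((LinearMap.mulRight k ℓ).comp (H1.subtype.comp (LinearMap.fst k H1 H0)))
      + ((LinearMap.mulRight k q).comp (H0.subtype.comp (LinearMap.snd k H1 H0)))
    have hφ_apply : ∀ x : H1 × H0, φ x = (x.1 : MvPolynomial (Fin 3) k) * ℓ + (x.2 : MvPolynomial (Fin 3) k) * q :=
      fun _ => rfl
    have hrange : LinearMap.range φ
        = (Ideal.span {ℓ, q}).restrictScalars k ⊓ homogeneousSubmodule (Fin 3) k (m + 2) := by
      apply le_antisymm
      · rintro _ ⟨⟨a, b⟩, rfl⟩
        rw [hφ_apply]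
        refine Submodule.mem_inf.mpr ⟨?_, ?_⟩
        · exact Ideal.add_mem _ (Ideal.mul_mem_left _ _ hℓI) (Ideal.mul_mem_left _ _ hqI)
        · exact (a.2.mul hℓ).add (b.2.mul hq)
      · rintro x hx
        obtain ⟨hxI, hxH⟩ := Submodule.mem_inf.mp hx
        obtain ⟨a, b, hab⟩ := Ideal.mem_span_pair.mp hxI
        have hx1 : homogeneousComponent (m + 2) x = x := by
          rw [homogeneousComponent_of_mem hxH, if_pos rfl]
        have hx2 : x = homogeneousComponent (m + 1) a * ℓ + homogeneousComponent m b * q := by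
          conv_lhs => rw [← hx1, ← hab]
          rw [map_add, IGD_hc_mul hℓ a (by omega), IGD_hc_mul hq b (by omega),
            show m + 2 - 1 = m + 1 from rfl, show m + 2 - 2 = m from rfl]
        exact ⟨(⟨_, homogeneousComponent_mem (m + 1) a⟩, ⟨_, homogeneousComponent_mem m b⟩),
          by rw [hφ_apply]; exact hx2.symm⟩
    rw [← hrange]
    have hA := LinearMap.finrank_range_add_finrank_ker φ
    rw [Module.finrank_prod, IGD_finrank, IGD_finrank] at hA
    -- now compute the kernel
    rcases Nat.eq_zero_or_eq_succ_pred m with hm | hm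
    · -- m = 0, kernel is trivial
      subst hm
      have hker : LinearMap.ker φ = ⊥ := by
        rw [LinearMap.ker_eq_bot']
        rintro ⟨⟨a, ha⟩, ⟨b, hb⟩⟩ hx
        rw [hφ_apply] at hx
        simp only at hx
        have hbC : b = C (coeff 0 b) := by
          have := homogeneousComponent_of_mem (p := b) (m := 0) hb
          rw [if_pos rfl, homogeneousComponent_zero] at this
          exact this.symm
        have hb0 : coeff 0 b = 0 := by
          by_contra hc
          apply hqℓ (C (coeff 0 b)⁻¹ * (-a))
          have : C (coeff 0 b) * q = -(a * ℓ) := by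
            rw [hbC] at hx
            linear_combination hx
          calc q = C (coeff 0 b)⁻¹ * (C (coeff 0 b) * q) := by
                rw [← mul_assoc, ← C_mul, inv_mul_cancel₀ hc, C_1, one_mul]
            _ = C (coeff 0 b)⁻¹ * (-(a * ℓ)) := by rw [this]
            _ = C (coeff 0 b)⁻¹ * (-a) * ℓ := by ring
        have hbz : b = 0 := by rw [hbC, hb0, C_0]
        have haz : a = 0 := by
          rw [hbz, zero_mul, add_zero, mul_eq_zero] at hx
          exact hx.resolve_right hℓ0
        ext <;> simp [haz, hbz]
      rw [hker, finrank_bot] at hA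
      have v1 : (0 + 1 + 2).choose 2 = 3 := by decide
      have v2 : (0 + 2).choose 2 = 1 := by decide
      have v3 : (0 + 2 + 2).choose 2 = 6 := by decide
      omega
    · -- m = m' + 1, kernel ≅ H m'
      obtain ⟨m', rfl⟩ : ∃ m', m = m' + 1 := ⟨m - 1, hm⟩
      set Hc := homogeneousSubmodule (Fin 3) k m'
      have hmem1 : ∀ c : Hc, -((c : MvPolynomial (Fin 3) k) * q) ∈ H1 := fun c => (c.2.mul hq).neg
      have hmem2 : ∀ c : Hc, (c : MvPolynomial (Fin 3) k) * ℓ ∈ H0 := fun c => c.2.mul hℓ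
      let ψ : Hc →ₗ[k] (H1 × H0) := LinearMap.prod
        (LinearMap.codRestrict H1 (-((LinearMap.mulRight k q).comp Hc.subtype)) hmem1)
        (LinearMap.codRestrict H0 ((LinearMap.mulRight k ℓ).comp Hc.subtype) hmem2)
      have hψ_apply : ∀ c : Hc, ψ c
          = (⟨-((c : MvPolynomial (Fin 3) k) * q), hmem1 c⟩, ⟨(c : MvPolynomial (Fin 3) k) * ℓ, hmem2 c⟩) :=
        fun _ => rfl
      have hψ_inj : Function.Injective ψ := by
        rw [injective_iff_map_eq_zero]  -- ψ additive group hom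
        intro c hc
        have h2 : (c : MvPolynomial (Fin 3) k) * ℓ = 0 := by
          have := congrArg (fun x : H1 × H0 => (x.2 : MvPolynomial (Fin 3) k)) hc
          simpa [hψ_apply] using this
        have := mul_eq_zero.mp h2
        exact Subtype.ext (this.resolve_right hℓ0)
      have hker : LinearMap.ker φ = LinearMap.range ψ := by
        apply le_antisymm
        · rintro ⟨⟨a, ha⟩, ⟨b, hb⟩⟩ hx
          rw [LinearMap.mem_ker, hφ_apply] at hx
          simp only at hx
          have hprime := IGD_prime hℓ hℓ0
          have hndvd : ¬ ℓ ∣ q := by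
            rintro ⟨r, hr⟩
            exact hqℓ r (by rw [hr]; ring)
          have hdvd : ℓ ∣ b * q := ⟨-a, by linear_combination hx⟩
          obtain ⟨c₀, hc₀⟩ := (hprime.dvd_mul.mp hdvd).resolve_right hndvd
          have hbh : homogeneousComponent (m' + 1) b = b := by
            rw [homogeneousComponent_of_mem hb, if_pos rfl]
          have hb' : b = homogeneousComponent m' c₀ * ℓ := by
            conv_lhs => rw [← hbh, hc₀, mul_comm]
            rw [IGD_hc_mul hℓ c₀ (by omega), show m' + 1 - 1 = m' from rfl]
          have ha' : a = -(homogeneousComponent m' c₀ * q) := by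
            have hz : (a + homogeneousComponent m' c₀ * q) * ℓ = 0 := by
              linear_combination hx - q * hb'
            rcases mul_eq_zero.mp hz with h | h
            · linear_combination h
            · exact absurd h hℓ0
          refine ⟨⟨_, homogeneousComponent_mem m' c₀⟩, ?_⟩
          rw [hψ_apply]
          exact Prod.ext (Subtype.ext ha'.symm) (Subtype.ext hb'.symm)
        · rintro _ ⟨c, rfl⟩
          rw [LinearMap.mem_ker, hψ_apply, hφ_apply]
          simp only
          ring
      rw [hker, LinearMap.finrank_range_of_inj hψ_inj, IGD_finrank] at hA
      have s1 : (m' + 1 + 2 + 2).choose 2 = (m' + 1 + 1 + 2).choose 2 + (m' + 1 + 1 + 2) :=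
        IGD_choose_step (m' + 2)
      have s2 : (m' + 1 + 1 + 2).choose 2 = (m' + 1 + 2).choose 2 + (m' + 1 + 2) :=
        IGD_choose_step (m' + 1)
      have s3 : (m' + 1 + 2).choose 2 = (m' + 2).choose 2 + (m' + 2) :=
        IGD_choose_step m'
      omega
end

section
/- Let ℓ = aX0 + bX1 + cX2 with a, b, c integers, gcd(a,b,c) = 1, and let q be an integral homogeneous quadratic form in X0, X1, X2. Assume that the subgroup of the lattice ℤ⁶ of integral quadratic forms generated by X0ℓ, X1ℓ, X2ℓ, q has rank 4 and is saturated (the quotient of ℤ⁶ by it is torsion-free). Let v = (v₀, v₁, v₂) and w = (w₀, w₁, w₂) ∈ ℤ³ be linearly independent primitive vectors with ℓ(v) = q(v) = ℓ(w) = q(w) = 0, and let e, f be a ℤ-basis of the lattice {x ∈ ℤ³ : a x₀ + b x₁ + c x₂ = 0}. Then the discriminant of the binary quadratic form Q(S, T) := q(S·e + T·f) equals g², where g = gcd(v₁w₂ − v₂w₁, v₂w₀ − v₀w₂, v₀w₁ − v₁w₀) is the gcd of the coordinates of the cross product v × w. -/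
/-- Evaluation of the integral quadratic form with coefficient vector
`q = (q₀, …, q₅)` (corresponding to the monomials `X0², X0X1, X0X2, X1², X1X2, X2²`)
at a point `x` with coordinates in a commutative ring. -/
def qeval {R : Type*} [CommRing R] (q : Fin 6 → ℤ) (x : Fin 3 → R) : R :=
  (q 0 : R) * x 0 ^ 2 + (q 1 : R) * x 0 * x 1 + (q 2 : R) * x 0 * x 2 +
    (q 3 : R) * x 1 ^ 2 + (q 4 : R) * x 1 * x 2 + (q 5 : R) * x 2 ^ 2

lemma qeval_apply {R : Type*} [CommRing R] (q : Fin 6 → ℤ) (x0 x1 x2 : R) :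
    qeval q ![x0,x1,x2] = (q 0 : R) * x0^2 + (q 1 : R) * x0*x1 + (q 2 : R) * x0*x2 +
      (q 3 : R) * x1^2 + (q 4 : R) * x1*x2 + (q 5 : R) * x2^2 := by
  simp [qeval]

lemma solve_mu {K : Type*} [Field K] (α β γ Q0 Q1 Q2 Q3 Q4 Q5 : K) (hα : α ≠ 0)
    (h1 : Q0*β^2 - Q1*α*β + Q3*α^2 = 0)
    (h2 : Q0*γ^2 - Q2*α*γ + Q5*α^2 = 0)
    (h3 : Q0*(β+γ)^2 - Q1*α*(β+γ) - Q2*α*(β+γ) + Q3*α^2 + Q4*α^2 + Q5*α^2 = 0) :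
    ∃ μ0 μ1 μ2 : K, Q0 = α*μ0 ∧ Q1 = α*μ1 + β*μ0 ∧ Q2 = α*μ2 + γ*μ0 ∧
      Q3 = β*μ1 ∧ Q4 = β*μ2 + γ*μ1 ∧ Q5 = γ*μ2 := by
  refine ⟨Q0/α, (Q1 - β*Q0/α)/α, (Q2 - γ*Q0/α)/α, by field_simp, by field_simp; ring,
    by field_simp; ring, ?_, ?_, ?_⟩
  · field_simp
    linear_combination h1
  · field_simp
    linear_combination h3 - h1 - h2
  · field_simp
    linear_combination h2

open Submodule in
lemma rank_contra (g0 g1 g2 q : Fin 6 → ℤ) (r : ℤ) (hr : r ≠ 0)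
    (hq : r • q ∈ Submodule.span ℤ ({g0, g1, g2} : Set (Fin 6 → ℤ)))
    (hrank : Module.finrank ℤ ↥(Submodule.span ℤ ({g0, g1, g2, q} : Set (Fin 6 → ℤ))) = 4) :
    False := by
  have hle : Module.finrank ℤ ↥(Submodule.span ℤ ({g0, g1, g2, q} : Set (Fin 6 → ℤ)))
      ≤ Module.finrank ℤ ↥(Submodule.span ℤ ({g0, g1, g2} : Set (Fin 6 → ℤ))) := by
    apply LinearMap.finrank_le_of_isSMulRegular (s := r)
    · exact smul_right_injective (Fin 6 → ℤ) hr
    · intro x hx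
      induction hx using Submodule.span_induction with
      | mem y hy =>
        rcases hy with rfl | rfl | rfl | rfl
        · exact smul_mem _ r (subset_span (by simp))
        · exact smul_mem _ r (subset_span (by simp))
        · exact smul_mem _ r (subset_span (by simp))
        · exact hq
      | zero => simp
      | add x y _ _ hx hy => rw [smul_add]; exact add_mem hx hy
      | smul t x _ hx => rw [smul_comm]; exact smul_mem _ t hx
  have h3 : Module.finrank ℤ ↥(Submodule.span ℤ ({g0, g1, g2} : Set (Fin 6 → ℤ))) ≤ 3 := by
    have h := finrank_range_le_card (R := ℤ) ![g0, g1, g2]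
    have hs : Set.range ![g0, g1, g2] = ({g0, g1, g2} : Set (Fin 6 → ℤ)) := by
      ext x; simp [Matrix.range_cons, Matrix.range_empty]; tauto
    rw [hs] at h
    simpa [Set.finrank] using h
  omega

open Submodule in
lemma content_pm_one (a b c : ℤ) (habc : Int.gcd (Int.gcd a b) c = 1)
    (q : Fin 6 → ℤ)
    (hrank : Module.finrank ℤ
        ↥(Submodule.span ℤ
          ({![a, b, c, 0, 0, 0], ![0, a, 0, b, c, 0], ![0, 0, a, 0, b, c], q} :
            Set (Fin 6 → ℤ))) = 4)
    (hsat : ∀ (x : Fin 6 → ℤ) (n : ℤ), n ≠ 0 →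
      n • x ∈ Submodule.span ℤ
          ({![a, b, c, 0, 0, 0], ![0, a, 0, b, c, 0], ![0, 0, a, 0, b, c], q} :
            Set (Fin 6 → ℤ)) →
      x ∈ Submodule.span ℤ
          ({![a, b, c, 0, 0, 0], ![0, a, 0, b, c, 0], ![0, 0, a, 0, b, c], q} :
            Set (Fin 6 → ℤ)))
    (k : ℤ)
    (hk : ∀ x : Fin 3 → ℤ, a * x 0 + b * x 1 + c * x 2 = 0 → k ∣ qeval q x) :
    k = 1 ∨ k = -1 := by
  by_contra hcon
  push_neg at hcon
  -- find a prime dividing all values of q on the lattice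
  obtain ⟨p, hp, hpq⟩ : ∃ p : ℕ, p.Prime ∧
      ∀ x : Fin 3 → ℤ, a * x 0 + b * x 1 + c * x 2 = 0 → (p : ℤ) ∣ qeval q x := by
    rcases eq_or_ne k 0 with rfl | hk0
    · exact ⟨2, Nat.prime_two, fun x hx => by
        have := hk x hx; rw [zero_dvd_iff] at this; simp [this]⟩
    · refine ⟨k.natAbs.minFac, Nat.minFac_prime ?_, fun x hx => ?_⟩
      · intro h1
        rcases Int.natAbs_eq_iff.mp h1 with h' | h' <;> simp_all
      · exact dvd_trans (Int.natCast_dvd_natCast.mpr (Nat.minFac_dvd _) |>.trans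
          (Int.natAbs_dvd.mpr dvd_rfl)) (hk x hx)
  haveI : Fact p.Prime := ⟨hp⟩
  -- values of q vanish mod p on the lattice
  have key : ∀ x0 x1 x2 : ℤ, a * x0 + b * x1 + c * x2 = 0 →
      (q 0 : ZMod p) * (x0 : ZMod p)^2 + (q 1 : ZMod p) * x0 * x1 + (q 2 : ZMod p) * x0 * x2 +
      (q 3 : ZMod p) * (x1 : ZMod p)^2 + (q 4 : ZMod p) * x1 * x2 +
      (q 5 : ZMod p) * (x2 : ZMod p)^2 = 0 := by
    intro x0 x1 x2 h
    have hd := hpq ![x0, x1, x2] (by simpa using h)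
    rw [qeval_apply] at hd
    have h2 := (ZMod.intCast_zmod_eq_zero_iff_dvd _ p).mpr hd
    push_cast at h2
    linear_combination h2
  -- not all of a, b, c are divisible by p
  have hnot : ¬ ((p:ℤ) ∣ a ∧ (p:ℤ) ∣ b ∧ (p:ℤ) ∣ c) := by
    rintro ⟨ha, hb, hc⟩
    have h1 : (p:ℤ) ∣ (Int.gcd (Int.gcd a b) c : ℤ) :=
      Int.dvd_coe_gcd (Int.dvd_coe_gcd ha hb) hc
    rw [habc] at h1
    exact hp.one_lt.ne' (by exact_mod_cast Int.eq_one_of_dvd_one (by positivity) h1)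
  -- obtain the six congruences
  obtain ⟨m0, m1, m2, E0, E1, E2, E3, E4, E5⟩ :
      ∃ m0 m1 m2 : ZMod p,
        (q 0 : ZMod p) = (a:ZMod p) * m0 ∧
        (q 1 : ZMod p) = (a:ZMod p) * m1 + (b:ZMod p) * m0 ∧
        (q 2 : ZMod p) = (a:ZMod p) * m2 + (c:ZMod p) * m0 ∧
        (q 3 : ZMod p) = (b:ZMod p) * m1 ∧
        (q 4 : ZMod p) = (b:ZMod p) * m2 + (c:ZMod p) * m1 ∧
        (q 5 : ZMod p) = (c:ZMod p) * m2 := by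
    have hAB : ¬ (p:ℤ) ∣ a ∨ ¬ (p:ℤ) ∣ b ∨ ¬ (p:ℤ) ∣ c := by tauto
    have hcast : ∀ z : ℤ, ¬ (p:ℤ) ∣ z → (z : ZMod p) ≠ 0 := fun z hz h =>
      hz ((ZMod.intCast_zmod_eq_zero_iff_dvd z p).mp h)
    rcases hAB with ha | hb | hc
    · obtain ⟨n0, n1, n2, e0, e1, e2, e3, e4, e5⟩ :=
        solve_mu (a:ZMod p) (b:ZMod p) (c:ZMod p)
          (q 0) (q 1) (q 2) (q 3) (q 4) (q 5) (hcast a ha)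
          (by have := key (-b) a 0 (by ring); push_cast at this ⊢; linear_combination this)
          (by have := key (-c) 0 a (by ring); push_cast at this ⊢; linear_combination this)
          (by have := key (-(b+c)) a a (by ring); push_cast at this ⊢; linear_combination this)
      exact ⟨n0, n1, n2, e0, e1, e2, e3, e4, e5⟩
    · obtain ⟨n0, n1, n2, e0, e1, e2, e3, e4, e5⟩ :=
        solve_mu (b:ZMod p) (a:ZMod p) (c:ZMod p)
          (q 3) (q 1) (q 4) (q 0) (q 2) (q 5) (hcast b hb)
          (by have := key (-b) a 0 (by ring); push_cast at this ⊢; linear_combination this)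
          (by have := key 0 c (-b) (by ring); push_cast at this ⊢; linear_combination this)
          (by have := key b (-(a+c)) b (by ring); push_cast at this ⊢; linear_combination this)
      exact ⟨n1, n0, n2, by linear_combination e3, by linear_combination e1,
        by linear_combination e4, by linear_combination e0, by linear_combination e2,
        by linear_combination e5⟩
    · obtain ⟨n0, n1, n2, e0, e1, e2, e3, e4, e5⟩ :=
        solve_mu (c:ZMod p) (b:ZMod p) (a:ZMod p)
          (q 5) (q 4) (q 2) (q 3) (q 1) (q 0) (hcast c hc)
          (by have := key 0 c (-b) (by ring); push_cast at this ⊢; linear_combination this)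
          (by have := key (-c) 0 a (by ring); push_cast at this ⊢; linear_combination this)
          (by have := key c c (-(a+b)) (by ring); push_cast at this ⊢; linear_combination this)
      exact ⟨n2, n1, n0, by linear_combination e5, by linear_combination e4,
        by linear_combination e2, by linear_combination e3, by linear_combination e1,
        by linear_combination e0⟩
  -- lift to the integers
  set μ0 : ℤ := (m0.val : ℤ) with hμ0
  set μ1 : ℤ := (m1.val : ℤ) with hμ1
  set μ2 : ℤ := (m2.val : ℤ) with hμ2
  have hcast0 : (μ0 : ZMod p) = m0 := by rw [hμ0]; push_cast [ZMod.natCast_val]; simp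
  have hcast1 : (μ1 : ZMod p) = m1 := by rw [hμ1]; push_cast [ZMod.natCast_val]; simp
  have hcast2 : (μ2 : ZMod p) = m2 := by rw [hμ2]; push_cast [ZMod.natCast_val]; simp
  have dvd' : ∀ z : ℤ, (z : ZMod p) = 0 → (p:ℤ) ∣ z := fun z h =>
    (ZMod.intCast_zmod_eq_zero_iff_dvd z p).mp h
  obtain ⟨x0, hx0⟩ := dvd' (q 0 - a*μ0) (by push_cast; rw [hcast0, E0]; ring)
  obtain ⟨x1, hx1⟩ := dvd' (q 1 - (a*μ1 + b*μ0)) (by push_cast; rw [hcast0, hcast1, E1]; ring)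
  obtain ⟨x2, hx2⟩ := dvd' (q 2 - (a*μ2 + c*μ0)) (by push_cast; rw [hcast0, hcast2, E2]; ring)
  obtain ⟨x3, hx3⟩ := dvd' (q 3 - b*μ1) (by push_cast; rw [hcast1, E3]; ring)
  obtain ⟨x4, hx4⟩ := dvd' (q 4 - (b*μ2 + c*μ1)) (by push_cast; rw [hcast1, hcast2, E4]; ring)
  obtain ⟨x5, hx5⟩ := dvd' (q 5 - c*μ2) (by push_cast; rw [hcast2, E5]; ring)
  set g0 : Fin 6 → ℤ := ![a, b, c, 0, 0, 0] with hg0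
  set g1 : Fin 6 → ℤ := ![0, a, 0, b, c, 0] with hg1
  set g2 : Fin 6 → ℤ := ![0, 0, a, 0, b, c] with hg2
  set X : Fin 6 → ℤ := ![x0, x1, x2, x3, x4, x5] with hX
  have hqc : ∀ i, q i = μ0 * g0 i + μ1 * g1 i + μ2 * g2 i + (p:ℤ) * X i := by
    intro i
    fin_cases i
    · show q 0 = μ0 * a + μ1 * 0 + μ2 * 0 + (p:ℤ) * x0; linarith
    · show q 1 = μ0 * b + μ1 * a + μ2 * 0 + (p:ℤ) * x1; linarith
    · show q 2 = μ0 * c + μ1 * 0 + μ2 * a + (p:ℤ) * x2; linarith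
    · show q 3 = μ0 * 0 + μ1 * b + μ2 * 0 + (p:ℤ) * x3; linarith
    · show q 4 = μ0 * 0 + μ1 * c + μ2 * b + (p:ℤ) * x4; linarith
    · show q 5 = μ0 * 0 + μ1 * 0 + μ2 * c + (p:ℤ) * x5; linarith
  have hqeq : q = μ0 • g0 + μ1 • g1 + μ2 • g2 + (p:ℤ) • X := by
    funext i
    simp only [Pi.add_apply, Pi.smul_apply, smul_eq_mul]
    exact hqc i
  set S : Set (Fin 6 → ℤ) := {g0, g1, g2, q} with hS
  have hg0m : g0 ∈ span ℤ S := subset_span (by simp [hS])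
  have hg1m : g1 ∈ span ℤ S := subset_span (by simp [hS])
  have hg2m : g2 ∈ span ℤ S := subset_span (by simp [hS])
  have hqm : q ∈ span ℤ S := subset_span (by simp [hS])
  have hpX : (p:ℤ) • X ∈ span ℤ S := by
    have : (p:ℤ) • X = q - (μ0 • g0 + μ1 • g1 + μ2 • g2) := by
      rw [hqeq]; abel
    rw [this]
    exact sub_mem hqm (add_mem (add_mem (smul_mem _ _ hg0m) (smul_mem _ _ hg1m))
      (smul_mem _ _ hg2m))
  have hXmem : X ∈ span ℤ S := hsat X p (by exact_mod_cast hp.pos.ne') hpX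
  rw [hS] at hXmem
  rw [show ({g0, g1, g2, q} : Set (Fin 6 → ℤ)) = insert g0 (insert g1 (insert g2 {q})) from rfl]
    at hXmem
  rw [Submodule.mem_span_insert] at hXmem
  obtain ⟨α0, z0, hz0, hXrep0⟩ := hXmem
  rw [Submodule.mem_span_insert] at hz0
  obtain ⟨α1, z1, hz1, hXrep1⟩ := hz0
  rw [Submodule.mem_span_insert] at hz1
  obtain ⟨α2, z2, hz2, hXrep2⟩ := hz1
  rw [Submodule.mem_span_singleton] at hz2
  obtain ⟨β, hβ⟩ := hz2
  have hXeq : X = α0 • g0 + α1 • g1 + α2 • g2 + β • q := by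
    rw [hXrep0, hXrep1, hXrep2, ← hβ]; abel
  have hrne : (1 - (p:ℤ)*β) ≠ 0 := by
    intro h
    have : (p:ℤ) ∣ 1 := ⟨β, by linarith⟩
    have := Int.le_of_dvd one_pos this
    have := hp.two_le
    omega
  refine rank_contra g0 g1 g2 q (1 - (p:ℤ)*β) hrne ?_ hrank
  have hfinal : (1 - (p:ℤ)*β) • q =
      (μ0 + p*α0) • g0 + (μ1 + p*α1) • g1 + (μ2 + p*α2) • g2 := by
    funext i
    have hX_i := congrFun hXeq i
    simp only [Pi.add_apply, Pi.smul_apply, smul_eq_mul] at hX_i ⊢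
    linear_combination hqc i + (p:ℤ) * hX_i
  rw [hfinal]
  exact add_mem (add_mem (smul_mem _ _ (subset_span (by simp)))
      (smul_mem _ _ (subset_span (by simp)))) (smul_mem _ _ (subset_span (by simp)))


/-- Let `ℓ = aX0 + bX1 + cX2` with `gcd(a,b,c) = 1` and let `q` be an integral quadratic
form such that the subgroup of `ℤ⁶` generated by `X0ℓ, X1ℓ, X2ℓ, q` has rank 4 and is
saturated.  Let `v, w ∈ ℤ³` be linearly independent primitive vectors solving
`ℓ = q = 0`, and let `e, f` be a `ℤ`-basis of the lattice `{x ∈ ℤ³ : ℓ(x) = 0}`.  Then the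
discriminant of the binary quadratic form `Q(S,T) = q(S·e + T·f)` equals `g²`, where `g`
is the gcd of the coordinates of the cross product `v × w`. -/
theorem disc_eq_gcd_sq (a b c : ℤ) (habc : Int.gcd (Int.gcd a b) c = 1)
    (q : Fin 6 → ℤ)
    (hrank : Module.finrank ℤ
        ↥(Submodule.span ℤ
          ({![a, b, c, 0, 0, 0], ![0, a, 0, b, c, 0], ![0, 0, a, 0, b, c], q} :
            Set (Fin 6 → ℤ))) = 4)
    (hsat : ∀ (x : Fin 6 → ℤ) (n : ℤ), n ≠ 0 →
      n • x ∈ Submodule.span ℤ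
          ({![a, b, c, 0, 0, 0], ![0, a, 0, b, c, 0], ![0, 0, a, 0, b, c], q} :
            Set (Fin 6 → ℤ)) →
      x ∈ Submodule.span ℤ
          ({![a, b, c, 0, 0, 0], ![0, a, 0, b, c, 0], ![0, 0, a, 0, b, c], q} :
            Set (Fin 6 → ℤ)))
    (v w : Fin 3 → ℤ)
    (hvw : LinearIndependent ℤ ![v, w])
    (hvprim : Int.gcd (Int.gcd (v 0) (v 1)) (v 2) = 1)
    (hwprim : Int.gcd (Int.gcd (w 0) (w 1)) (w 2) = 1)
    (hlv : a * v 0 + b * v 1 + c * v 2 = 0) (hqv : qeval q v = 0)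
    (hlw : a * w 0 + b * w 1 + c * w 2 = 0) (hqw : qeval q w = 0)
    (e f : Fin 3 → ℤ)
    (he : a * e 0 + b * e 1 + c * e 2 = 0) (hf : a * f 0 + b * f 1 + c * f 2 = 0)
    (hef : LinearIndependent ℤ ![e, f])
    (hspan : ∀ x : Fin 3 → ℤ, a * x 0 + b * x 1 + c * x 2 = 0 →
      ∃ m n : ℤ, x = m • e + n • f) :
    (qeval q (e + f) - qeval q e - qeval q f) ^ 2 - 4 * qeval q e * qeval q f =
      ((Int.gcd (Int.gcd (v 1 * w 2 - v 2 * w 1) (v 2 * w 0 - v 0 * w 2))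
          (v 0 * w 1 - v 1 * w 0) : ℕ) : ℤ) ^ 2 := by
  classical
  -- linear independence in terms of coefficients
  have pair_indep : ∀ (x y : Fin 3 → ℤ), LinearIndependent ℤ ![x, y] →
      ∀ s t : ℤ, s • x + t • y = 0 → s = 0 ∧ t = 0 := by
    intro x y hxy s t hst
    have h := Fintype.linearIndependent_iff.mp hxy ![s, t]
      (by simpa [Fin.sum_univ_two] using hst)
    exact ⟨h 0, h 1⟩
  obtain ⟨m1, n1, hv⟩ := hspan v hlv
  obtain ⟨m2, n2, hw⟩ := hspan w hlw
  have hvc : ∀ i, v i = m1 * e i + n1 * f i := by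
    intro i; rw [hv]; simp
  have hwc : ∀ i, w i = m2 * e i + n2 * f i := by
    intro i; rw [hw]; simp
  set A := qeval q e with hA
  set C := qeval q f with hC
  set B := qeval q (e + f) - A - C with hB
  have hcomb : ∀ m n : ℤ, qeval q (m • e + n • f) = A * m^2 + B * (m*n) + C * n^2 := by
    intro m n
    simp only [hB, hA, hC, qeval, Pi.add_apply, Pi.smul_apply, smul_eq_mul]
    ring
  have Eq1 : A * m1^2 + B * (m1*n1) + C * n1^2 = 0 := by
    rw [← hcomb, ← hv]; exact hqv
  have Eq2 : A * m2^2 + B * (m2*n2) + C * n2^2 = 0 := by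
    rw [← hcomb, ← hw]; exact hqw
  set d := m1 * n2 - m2 * n1 with hd
  -- d ≠ 0
  have hdne : d ≠ 0 := by
    intro h0
    have h0' : m1 * n2 - m2 * n1 = 0 := by rw [← hd]; exact h0
    have h1 : n2 • v + (-n1) • w = 0 := by
      funext i
      simp only [Pi.add_apply, Pi.smul_apply, Pi.zero_apply, smul_eq_mul]
      linear_combination n2 * hvc i - n1 * hwc i + e i * h0'
    obtain ⟨hn2, hn1⟩ := pair_indep v w hvw _ _ h1
    have h2 : m2 • v + (-m1) • w = 0 := by
      funext i
      simp only [Pi.add_apply, Pi.smul_apply, Pi.zero_apply, smul_eq_mul]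
      linear_combination m2 * hvc i - m1 * hwc i - f i * h0'
    obtain ⟨hm2, hm1⟩ := pair_indep v w hvw _ _ h2
    have hv0 : v = 0 := by
      funext i
      simp only [Pi.zero_apply]
      rw [hvc i]
      have : m1 = 0 := by linarith [neg_eq_zero.mp hm1]
      have h2 : n1 = 0 := by linarith [neg_eq_zero.mp hn1]
      rw [this, h2]; ring
    have := pair_indep v w hvw 1 0 (by rw [hv0]; funext i; simp)
    exact one_ne_zero this.1
  -- primitivity of the coordinates of v and w
  have coord_prim : ∀ (z : Fin 3 → ℤ) (m n : ℤ),
      (∀ i, z i = m * e i + n * f i) → Int.gcd (Int.gcd (z 0) (z 1)) (z 2) = 1 →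
      IsCoprime m n := by
    intro z m n hz hprim
    rw [Int.isCoprime_iff_gcd_eq_one]
    have hdl : ∀ i, (Int.gcd m n : ℤ) ∣ z i := fun i => by
      rw [hz i]
      exact dvd_add ((Int.gcd_dvd_left (a := m) (b := n)).mul_right (e i))
        ((Int.gcd_dvd_right (a := m) (b := n)).mul_right (f i))
    have hdvd : (Int.gcd m n : ℤ) ∣ 1 := by
      have h1 : (Int.gcd m n : ℤ) ∣ (Int.gcd (Int.gcd (z 0) (z 1)) (z 2) : ℤ) :=
        Int.dvd_coe_gcd (Int.dvd_coe_gcd (hdl 0) (hdl 1)) (hdl 2)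
      rwa [hprim] at h1
    exact_mod_cast Int.eq_one_of_dvd_one (by positivity) hdvd
  obtain ⟨xx1, yy1, hxy1⟩ := coord_prim v m1 n1 hvc hvprim
  obtain ⟨xx2, yy2, hxy2⟩ := coord_prim w m2 n2 hwc hwprim
  -- hxy1 : xx1 * m1 + yy1 * n1 = 1
  set B' := 2*A*(m1*m2) + B*(m1*n2 + m2*n1) + 2*C*(n1*n2) with hB'
  have key : d^2 * (B^2 - 4*A*C) = B'^2 := by
    rw [hd, hB']
    linear_combination (-4*(A*m2^2 + B*(m2*n2) + C*n2^2)) * Eq1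
  have IA : d^2 * A = -(n1*n2) * B' := by
    rw [hd, hB']; linear_combination n2^2 * Eq1 + n1^2 * Eq2
  have IB : d^2 * B = (m1*n2 + m2*n1) * B' := by
    rw [hd, hB']; linear_combination (-2*m2*n2) * Eq1 + (-2*m1*n1) * Eq2
  have IC : d^2 * C = -(m1*m2) * B' := by
    rw [hd, hB']; linear_combination m2^2 * Eq1 + m1^2 * Eq2
  have w1 : n1*n2*B' = d^2*(-A) := by linarith
  have w2 : m1*m2*B' = d^2*(-C) := by linarith
  have w3 : (m1*n2 + m2*n1)*B' = d^2*B := by linarith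
  set K1 := xx1^2*(m1*B + n1*C) - 2*xx1*yy1*(m1*A) - yy1^2*(n1*A) with hK1
  set K2 := -(xx1^2*(m1*C)) - 2*xx1*yy1*(n1*C) + yy1^2*(n1*B + m1*A) with hK2
  have G1 : n2*B' = d^2*K1 := by
    rw [hK1]
    linear_combination (xx1^2*m1)*w3 + (-(xx1^2*n1))*w2 + (2*xx1*yy1*m1 + yy1^2*n1)*w1
      + (-(n2*B'*(xx1*m1 + yy1*n1 + 1)))*hxy1
  have G2 : m2*B' = d^2*K2 := by
    rw [hK2]
    linear_combination (xx1^2*m1 + 2*xx1*yy1*n1)*w2 + (yy1^2*n1)*w3 + (-(yy1^2*m1))*w1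
      + (-(m2*B'*(xx1*m1 + yy1*n1 + 1)))*hxy1
  have hBp : B' = d^2*(xx2*K2 + yy2*K1) := by
    linear_combination xx2*G2 + yy2*G1 + (-B')*hxy2
  set k := xx2*K2 + yy2*K1 with hkdef
  have hd2 : d^2 ≠ 0 := pow_ne_zero 2 hdne
  have hAk : A = -(n1*n2)*k := by
    apply mul_left_cancel₀ hd2
    rw [IA, hBp]; ring
  have hBk : B = (m1*n2 + m2*n1)*k := by
    apply mul_left_cancel₀ hd2
    rw [IB, hBp]; ring
  have hCk : C = -(m1*m2)*k := by
    apply mul_left_cancel₀ hd2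
    rw [IC, hBp]; ring
  -- content argument: k = ±1
  have hkpm : k = 1 ∨ k = -1 := by
    apply content_pm_one a b c habc q hrank hsat k
    intro x hx
    obtain ⟨m, n, hxmn⟩ := hspan x hx
    rw [hxmn, hcomb, hAk, hBk, hCk]
    exact ⟨-(n1*n2)*m^2 + (m1*n2 + m2*n1)*(m*n) + -(m1*m2)*n^2, by ring⟩
  have hk2 : k^2 = 1 := by rcases hkpm with h | h <;> rw [h] <;> ring
  -- discriminant equals d^2
  have hdisc : B^2 - 4*A*C = d^2 := by
    apply mul_left_cancel₀ hd2
    rw [key, hBp]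
    have : (d^2*k)^2 = d^2*d^2*k^2 := by ring
    rw [show d ^ 2 * (xx2 * K2 + yy2 * K1) = d^2 * k from rfl, this, hk2]; ring
  -- cross product of e and f
  set cr0 := e 1 * f 2 - e 2 * f 1 with hcr0
  set cr1 := e 2 * f 0 - e 0 * f 2 with hcr1
  set cr2 := e 0 * f 1 - e 1 * f 0 with hcr2
  have c0 : v 1 * w 2 - v 2 * w 1 = d * cr0 := by
    rw [hvc 1, hvc 2, hwc 1, hwc 2, hd, hcr0]; ring
  have c1 : v 2 * w 0 - v 0 * w 2 = d * cr1 := by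
    rw [hvc 0, hvc 2, hwc 0, hwc 2, hd, hcr1]; ring
  have c2 : v 0 * w 1 - v 1 * w 0 = d * cr2 := by
    rw [hvc 0, hvc 1, hwc 0, hwc 1, hd, hcr2]; ring
  -- the cross product of e, f is primitive
  have hprim_cr : Int.gcd (Int.gcd cr0 cr1) cr2 = 1 := by
    by_contra hne
    obtain ⟨p, hp, h0, h1, h2⟩ : ∃ p : ℕ, p.Prime ∧
        (p:ℤ) ∣ cr0 ∧ (p:ℤ) ∣ cr1 ∧ (p:ℤ) ∣ cr2 := by
      rcases Nat.eq_zero_or_pos (Int.gcd (Int.gcd cr0 cr1) cr2) with hg0 | hgpos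
      · have h01 := Int.gcd_eq_zero_iff.mp hg0
        have h01' : Int.gcd cr0 cr1 = 0 := by exact_mod_cast h01.1
        have h00 := Int.gcd_eq_zero_iff.mp h01'
        exact ⟨2, Nat.prime_two, by rw [h00.1]; exact dvd_zero _,
          by rw [h00.2]; exact dvd_zero _, by rw [h01.2]; exact dvd_zero _⟩
      · set g := Int.gcd (Int.gcd cr0 cr1) cr2 with hgdef
        have hmf : (g.minFac : ℤ) ∣ (g : ℤ) := Int.natCast_dvd_natCast.mpr (Nat.minFac_dvd g)
        have hg1 : (g:ℤ) ∣ (Int.gcd cr0 cr1 : ℤ) := Int.gcd_dvd_left _ _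
        have hg2 : (g:ℤ) ∣ cr2 := Int.gcd_dvd_right _ _
        refine ⟨g.minFac, Nat.minFac_prime hne, ?_, ?_, ?_⟩
        · exact hmf.trans (hg1.trans (Int.gcd_dvd_left _ _))
        · exact hmf.trans (hg1.trans (Int.gcd_dvd_right _ _))
        · exact hmf.trans hg2
    have hpne : (p:ℤ) ≠ 0 := by exact_mod_cast hp.pos.ne'
    -- e is not divisible by p
    obtain ⟨j, hj⟩ : ∃ j, ¬ (p:ℤ) ∣ e j := by
      by_contra hall
      push_neg at hall
      choose y hy using fun i => (hall i).elim (fun z hz => (⟨z, hz⟩ : ∃ z, e i = (p:ℤ)*z))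
      have hly : a * y 0 + b * y 1 + c * y 2 = 0 := by
        apply mul_left_cancel₀ hpne
        rw [mul_zero]
        linear_combination he - a*(hy 0) - b*(hy 1) - c*(hy 2)
      obtain ⟨m, n, hyef⟩ := hspan y hly
      have hrel : ((p:ℤ)*m - 1) • e + ((p:ℤ)*n) • f = 0 := by
        funext i
        have hyi := congrFun hyef i
        simp only [Pi.add_apply, Pi.smul_apply, Pi.zero_apply, smul_eq_mul] at hyi ⊢
        linear_combination -((p:ℤ)*hyi) - hy i
      obtain ⟨hpm, hpn⟩ := pair_indep e f hef _ _ hrel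
      have hdvd1 : (p:ℤ) ∣ 1 := ⟨m, by linarith⟩
      have := Int.le_of_dvd one_pos hdvd1
      have h2le := hp.two_le
      omega
    obtain ⟨z0, hz0⟩ := h0
    obtain ⟨z1, hz1⟩ := h1
    obtain ⟨z2, hz2⟩ := h2
    rw [hcr0] at hz0
    rw [hcr1] at hz1
    rw [hcr2] at hz2
    have hdiv : ∀ i, ∃ yv, f j * e i - e j * f i = (p:ℤ) * yv := by
      intro i
      fin_cases j <;> fin_cases i
      · exact ⟨0, by show f 0 * e 0 - e 0 * f 0 = _; ring⟩
      · exact ⟨-z2, by show f 0 * e 1 - e 0 * f 1 = _; linear_combination -hz2⟩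
      · exact ⟨z1, by show f 0 * e 2 - e 0 * f 2 = _; linear_combination hz1⟩
      · exact ⟨z2, by show f 1 * e 0 - e 1 * f 0 = _; linear_combination hz2⟩
      · exact ⟨0, by show f 1 * e 1 - e 1 * f 1 = _; ring⟩
      · exact ⟨-z0, by show f 1 * e 2 - e 1 * f 2 = _; linear_combination -hz0⟩
      · exact ⟨-z1, by show f 2 * e 0 - e 2 * f 0 = _; linear_combination -hz1⟩
      · exact ⟨z0, by show f 2 * e 1 - e 2 * f 1 = _; linear_combination hz0⟩
      · exact ⟨0, by show f 2 * e 2 - e 2 * f 2 = _; ring⟩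
    choose y hy using hdiv
    have hly : a * y 0 + b * y 1 + c * y 2 = 0 := by
      apply mul_left_cancel₀ hpne
      rw [mul_zero]
      linear_combination f j * he - e j * hf - a*(hy 0) - b*(hy 1) - c*(hy 2)
    obtain ⟨m, n, hyef⟩ := hspan y hly
    have hrel : (f j - (p:ℤ)*m) • e + (-(e j) - (p:ℤ)*n) • f = 0 := by
      funext i
      have hyi := congrFun hyef i
      simp only [Pi.add_apply, Pi.smul_apply, Pi.zero_apply, smul_eq_mul] at hyi ⊢
      linear_combination hy i + (p:ℤ)*hyi
    obtain ⟨hfj, hej⟩ := pair_indep e f hef _ _ hrel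
    exact hj ⟨-n, by linarith⟩
  -- final computation
  rw [hdisc, c0, c1, c2]
  have hgcd : Int.gcd (Int.gcd (d*cr0) (d*cr1)) (d*cr2) = d.natAbs := by
    rw [Int.gcd_mul_left]
    show Nat.gcd (Int.natAbs ↑(d.natAbs * Int.gcd cr0 cr1)) (Int.natAbs (d*cr2)) = d.natAbs
    rw [Int.natAbs_natCast, Int.natAbs_mul, Nat.gcd_mul_left]
    have : Nat.gcd (Int.gcd cr0 cr1) cr2.natAbs = Int.gcd (Int.gcd cr0 cr1) cr2 := by
      show _ = Nat.gcd (Int.natAbs ↑(Int.gcd cr0 cr1)) cr2.natAbs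
      rw [Int.natAbs_natCast]
    rw [this, hprim_cr, Nat.mul_one]
  rw [hgcd, Int.natAbs_sq]
end

section
/- Let d be an integer that is not a perfect square, and let g, α, β be integers with β ≠ 0. Then the quotient ring ℤ[√d] / (g + α√d, β√d) (the quotient by the ideal generated by the two listed elements) is finite, of cardinality equal to gcd(β²d, αβd, g² − α²d, βg) (the nonnegative gcd of these four integers). -/
section aux
variable (d g α β : ℤ)

private abbrev Iidl : Ideal (Zsqrtd d) := Ideal.span ({⟨g, α⟩, ⟨0, β⟩} : Set (Zsqrtd d))

private lemma mem_Iidl_iff {d g α β : ℤ} {x : Zsqrtd d} :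
    x ∈ Iidl d g α β ↔ ∃ p q z w : ℤ,
      x.re = p * g + q * (α * d) + w * (β * d) ∧ x.im = p * α + q * g + z * β := by
  rw [Ideal.mem_span_pair]
  constructor
  · rintro ⟨u, v, rfl⟩
    refine ⟨u.re, u.im, v.re, v.im, ?_, ?_⟩ <;>
      simp [Zsqrtd.add_def, Zsqrtd.re_mul, Zsqrtd.im_mul] <;> ring
  · rintro ⟨p, q, z, w, h1, h2⟩
    refine ⟨⟨p, q⟩, ⟨z, w⟩, ?_⟩
    ext : 1 <;> simp [Zsqrtd.re_mul, Zsqrtd.im_mul] <;> linarith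

private def imLin (d : ℤ) : Zsqrtd d →ₗ[ℤ] ℤ where
  toFun x := x.im
  map_add' _ _ := rfl
  map_smul' z x := by simp [zsmul_eq_mul, Zsqrtd.im_mul]

private noncomputable def pihom (c : ℕ) (hc : ∀ x ∈ Iidl d g α β, (c : ℤ) ∣ x.im) :
    (Zsqrtd d ⧸ Iidl d g α β) →+ ZMod c :=
  (((Submodule.liftQ ((Iidl d g α β).restrictScalars ℤ)
      ((Int.castAddHom (ZMod c)).toIntLinearMap.comp (imLin d))
      (fun x hx => by
        simp only [LinearMap.mem_ker, LinearMap.comp_apply]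
        exact (ZMod.intCast_zmod_eq_zero_iff_dvd _ _).2 (hc x hx))).comp
    (Submodule.Quotient.restrictScalarsEquiv ℤ (Iidl d g α β)).symm.toLinearMap)).toAddMonoidHom

private lemma pihom_mk (c : ℕ) (hc : ∀ x ∈ Iidl d g α β, (c : ℤ) ∣ x.im) (x : Zsqrtd d) :
    pihom d g α β c hc (Ideal.Quotient.mk _ x) = (x.im : ZMod c) := rfl

end aux

/-- Let `d` be a non-square integer and `g, α, β` integers with `β ≠ 0`.  Then the quotient
of `ℤ[√d]` by the ideal generated by `g + α√d` and `β√d` is finite, of cardinality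
`gcd(β²d, αβd, g² − α²d, βg)`. -/
theorem card_quotient_eq_gcd (d : ℤ) (hd : ¬∃ n : ℤ, d = n ^ 2)
    (g α β : ℤ) (hβ : β ≠ 0) :
    Finite (Zsqrtd d ⧸ Ideal.span ({⟨g, α⟩, ⟨0, β⟩} : Set (Zsqrtd d))) ∧
      Nat.card (Zsqrtd d ⧸ Ideal.span ({⟨g, α⟩, ⟨0, β⟩} : Set (Zsqrtd d))) =
        Int.gcd (β ^ 2 * d) (Int.gcd (α * β * d) (Int.gcd (g ^ 2 - α ^ 2 * d) (β * g))) := by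
  classical
  have hd0 : d ≠ 0 := fun h => hd ⟨0, by simp [h]⟩
  set cn : ℕ := Int.gcd α (Int.gcd g β) with hcn
  set Gn : ℕ := Int.gcd (β ^ 2 * d) (Int.gcd (α * β * d) (Int.gcd (g ^ 2 - α ^ 2 * d) (β * g)))
    with hGn
  have hβ2d : β ^ 2 * d ≠ 0 := mul_ne_zero (pow_ne_zero _ hβ) hd0
  have hGn0 : Gn ≠ 0 := by
    intro h
    rw [hGn, Int.gcd_eq_zero_iff] at h
    exact hβ2d h.1
  have hcn0 : cn ≠ 0 := by
    intro h
    rw [hcn, Int.gcd_eq_zero_iff] at h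
    have h2 := Int.natCast_eq_zero.1 h.2
    rw [Int.gcd_eq_zero_iff] at h2
    exact hβ h2.2
  have hG1 : (Gn : ℤ) ∣ β ^ 2 * d := (Int.gcd_dvd_left _ _)
  have hG2 : (Gn : ℤ) ∣ α * β * d := dvd_trans (Int.gcd_dvd_right _ _) (Int.gcd_dvd_left _ _)
  have hG3 : (Gn : ℤ) ∣ g ^ 2 - α ^ 2 * d :=
    dvd_trans (Int.gcd_dvd_right _ _) (dvd_trans (Int.gcd_dvd_right _ _) (Int.gcd_dvd_left _ _))
  have hG4 : (Gn : ℤ) ∣ β * g :=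
    dvd_trans (Int.gcd_dvd_right _ _) (dvd_trans (Int.gcd_dvd_right _ _) (Int.gcd_dvd_right _ _))
  have hcα : (cn : ℤ) ∣ α := (Int.gcd_dvd_left _ _)
  have hcg : (cn : ℤ) ∣ g := dvd_trans (Int.gcd_dvd_right _ _) (Int.gcd_dvd_left _ _)
  have hcβ : (cn : ℤ) ∣ β := dvd_trans (Int.gcd_dvd_right _ _) (Int.gcd_dvd_right _ _)
  obtain ⟨α', hα'⟩ := hcα
  obtain ⟨g', hg'⟩ := hcg
  obtain ⟨β', hβ'⟩ := hcβ
  have hcG : (cn : ℤ) ∣ (Gn : ℤ) := by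
    refine Int.natCast_dvd_natCast.2 <| Int.dvd_gcd ⟨β' * (β * d), by rw [hβ']; ring⟩ (Int.natCast_dvd_natCast.2 <| Int.dvd_gcd ⟨α' * (β * d), by
      rw [hα']; ring⟩ (Int.natCast_dvd_natCast.2 <| Int.dvd_gcd ⟨g' * g - α' * (α * d), by rw [hg', hα']; ring⟩
      ⟨β' * g, by rw [hβ']; ring⟩))
  set a : ℤ := (Gn : ℤ) / (cn : ℤ) with ha
  have hca : (cn : ℤ) * a = (Gn : ℤ) := Int.mul_ediv_cancel' hcG
  have hcnz : (cn : ℤ) ≠ 0 := Int.natCast_ne_zero.2 hcn0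
  have hcpos : (0 : ℤ) < cn := Int.natCast_pos.2 (Nat.pos_of_ne_zero hcn0)
  have ha0 : a ≠ 0 := by
    intro h
    rw [h, mul_zero] at hca
    exact hGn0 (by exact_mod_cast hca.symm)
  have hapos : 0 ≤ a := by
    by_contra h
    push_neg at h
    nlinarith [Int.natCast_nonneg Gn]
  obtain ⟨P, Q, Rr, hPQR⟩ : ∃ P Q Rr : ℤ, (cn : ℤ) = α * P + g * Q + β * Rr := by
    have h1 := Int.gcd_eq_gcd_ab α (Int.gcd g β)
    have h2 := Int.gcd_eq_gcd_ab g β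
    exact ⟨Int.gcdA α (Int.gcd g β), Int.gcdA g β * Int.gcdB α (Int.gcd g β),
      Int.gcdB g β * Int.gcdB α (Int.gcd g β), by rw [hcn, h1, h2]; ring⟩
  obtain ⟨E1, E2, E3, E4, hE⟩ : ∃ E1 E2 E3 E4 : ℤ,
      (Gn : ℤ) = (β ^ 2 * d) * E1 + (α * β * d) * E2 + (g ^ 2 - α ^ 2 * d) * E3 + (β * g) * E4 := by
    obtain ⟨X1, Y1, hXY1⟩ : ∃ X Y : ℤ, (Gn : ℤ) = (β ^ 2 * d) * X +
        (↑(Int.gcd (α * β * d) (↑(Int.gcd (g ^ 2 - α ^ 2 * d) (β * g)) : ℤ)) : ℤ) * Y :=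
      ⟨_, _, by rw [hGn]; exact Int.gcd_eq_gcd_ab _ _⟩
    obtain ⟨X2, Y2, hXY2⟩ : ∃ X Y : ℤ, (↑(Int.gcd (α * β * d)
        (↑(Int.gcd (g ^ 2 - α ^ 2 * d) (β * g)) : ℤ)) : ℤ) = (α * β * d) * X +
        (↑(Int.gcd (g ^ 2 - α ^ 2 * d) (β * g)) : ℤ) * Y :=
      ⟨_, _, Int.gcd_eq_gcd_ab _ _⟩
    obtain ⟨X3, Y3, hXY3⟩ : ∃ X Y : ℤ, (↑(Int.gcd (g ^ 2 - α ^ 2 * d) (β * g)) : ℤ) =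
        (g ^ 2 - α ^ 2 * d) * X + (β * g) * Y :=
      ⟨_, _, Int.gcd_eq_gcd_ab _ _⟩
    exact ⟨X1, X2 * Y1, X3 * (Y2 * Y1), Y3 * (Y2 * Y1), by rw [hXY1, hXY2, hXY3]; ring⟩
  -- characterization of the integers s with ⟨s,0⟩ in the ideal
  have hmemN : ∀ s : ℤ, ((⟨s, 0⟩ : Zsqrtd d) ∈ Iidl d g α β) ↔ a ∣ s := by
    intro s
    constructor
    · intro hs
      obtain ⟨p, q, z, w, h1, h2⟩ := mem_Iidl_iff.1 hs
      change s = _ at h1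
      change (0 : ℤ) = _ at h2
      have hαs : (Gn : ℤ) ∣ α * s := by
        have hh : α * s = -q * (g ^ 2 - α ^ 2 * d) - z * (β * g) + w * (α * β * d) := by
          linear_combination α * h1 - g * h2
        rw [hh]
        exact dvd_add (dvd_sub (hG3.mul_left _) (hG4.mul_left _)) (hG2.mul_left _)
      have hgs : (Gn : ℤ) ∣ g * s := by
        have hh : g * s = p * (g ^ 2 - α ^ 2 * d) - z * (α * β * d) + (w * d) * (β * g) := by
          linear_combination g * h1 - (α * d) * h2
        rw [hh]
        exact dvd_add (dvd_sub (hG3.mul_left _) (hG2.mul_left _)) (hG4.mul_left _)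
      have hβs : (Gn : ℤ) ∣ β * s := by
        have hh : β * s = (β * g) * p + (α * β * d) * q + (β ^ 2 * d) * w := by
          linear_combination β * h1
        rw [hh]
        exact dvd_add (dvd_add (hG4.mul_right _) (hG2.mul_right _)) (hG1.mul_right _)
      have hGcs : (Gn : ℤ) ∣ (cn : ℤ) * s := by
        have hh : (cn : ℤ) * s = P * (α * s) + Q * (g * s) + Rr * (β * s) := by
          rw [hPQR]; ring
        rw [hh]
        exact dvd_add (dvd_add (hαs.mul_left _) (hgs.mul_left _)) (hβs.mul_left _)
      rw [← hca] at hGcs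
      exact (mul_dvd_mul_iff_left hcnz).1 hGcs
    · rintro ⟨k, rfl⟩
      rw [mem_Iidl_iff]
      have key : a = (β' * (β * d)) * E1 + (β' * (α * d)) * E2 + (g' * g - α' * (α * d)) * E3
          + (β' * g) * E4 := by
        apply mul_left_cancel₀ hcnz
        rw [hca, hE]
        rw [hβ', hα', hg']
        ring
      refine ⟨k * (E4 * β' + E3 * g'), k * (E2 * β' - E3 * α'), k * (-(E4 * α') - E2 * g'),
        k * (E1 * β'), ?_, ?_⟩
      · show a * k = _
        rw [key]; ring
      · show (0 : ℤ) = _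
        rw [hα', hβ', hg']
        ring
  have hIim : ∀ x ∈ Iidl d g α β, (cn : ℤ) ∣ x.im := by
    intro x hx
    obtain ⟨p, q, z, w, h1, h2⟩ := mem_Iidl_iff.1 hx
    rw [h2]
    exact dvd_add (dvd_add ((Int.gcd_dvd_left _ _).mul_left p)
      ((dvd_trans (Int.gcd_dvd_right _ _) (Int.gcd_dvd_left _ _)).mul_left q))
      ((dvd_trans (Int.gcd_dvd_right _ _) (Int.gcd_dvd_right _ _)).mul_left z)
  set π := pihom d g α β cn hIim with hπ
  have hπsurj : Function.Surjective π := by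
    intro m
    obtain ⟨t, rfl⟩ := ZMod.intCast_surjective m
    exact ⟨Ideal.Quotient.mk _ (⟨0, t⟩ : Zsqrtd d), rfl⟩
  set ρ : ℤ →+ (Zsqrtd d ⧸ Iidl d g α β) :=
    ((Ideal.Quotient.mk (Iidl d g α β)).comp (Int.castRingHom (Zsqrtd d))).toAddMonoidHom with hρ
  have hρs : ∀ s : ℤ, ρ s = Ideal.Quotient.mk _ (⟨s, 0⟩ : Zsqrtd d) := by
    intro s
    show Ideal.Quotient.mk _ ((s : ℤ) : Zsqrtd d) = _
    have hcast : ((s : ℤ) : Zsqrtd d) = ⟨s, 0⟩ := by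
      ext : 1
      · simp
      · simp
    rw [hcast]
  have hrange : ρ.range = π.ker := by
    ext xq
    constructor
    · rintro ⟨s, rfl⟩
      show π (ρ s) = 0
      rw [hρs]
      show (((⟨s, 0⟩ : Zsqrtd d).im : ℤ) : ZMod cn) = 0
      simp
    · intro hxq
      obtain ⟨x, rfl⟩ := Ideal.Quotient.mk_surjective xq
      have h0 : ((x.im : ℤ) : ZMod cn) = 0 := hxq
      obtain ⟨t, ht⟩ := (ZMod.intCast_zmod_eq_zero_iff_dvd _ _).1 h0
      refine ⟨x.re - t * (g * P + (α * d) * Q), ?_⟩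
      rw [hρs, Ideal.Quotient.eq]
      rw [mem_Iidl_iff]
      refine ⟨-(t * P), -(t * Q), -(t * Rr), 0, ?_, ?_⟩
      · show ((⟨x.re - t * (g * P + (α * d) * Q), 0⟩ : Zsqrtd d) - x).re = _
        simp only [Zsqrtd.re_sub]
        ring
      · show ((⟨x.re - t * (g * P + (α * d) * Q), 0⟩ : Zsqrtd d) - x).im = _
        simp only [Zsqrtd.im_sub]
        change (0 : ℤ) - x.im = _
        rw [ht, hPQR]
        ring
  have hkerρ : ρ.ker = AddSubgroup.zmultiples a := by
    ext s
    rw [AddMonoidHom.mem_ker, Int.mem_zmultiples_iff, hρs, Ideal.Quotient.eq_zero_iff_mem]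
    exact hmemN s
  have e1 : (ℤ ⧸ ρ.ker) ≃+ π.ker :=
    (QuotientAddGroup.quotientKerEquivRange ρ).trans (AddEquiv.addSubgroupCongr hrange)
  have e2 : (ℤ ⧸ ρ.ker) ≃+ ZMod a.natAbs :=
    (QuotientAddGroup.quotientAddEquivOfEq hkerρ).trans (Int.quotientZMultiplesEquivZMod a)
  have e3 : ((Zsqrtd d ⧸ Iidl d g α β) ⧸ π.ker) ≃+ ZMod cn :=
    QuotientAddGroup.quotientKerEquivOfSurjective π hπsurj
  haveI : NeZero cn := ⟨hcn0⟩
  haveI : NeZero a.natAbs := ⟨Int.natAbs_ne_zero.2 ha0⟩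
  haveI fin1 : Finite π.ker := Finite.of_equiv _ (e2.symm.trans e1).toEquiv
  haveI fin2 : Finite ((Zsqrtd d ⧸ Iidl d g α β) ⧸ π.ker) := Finite.of_equiv _ e3.symm.toEquiv
  have finQ : Finite (Zsqrtd d ⧸ Iidl d g α β) :=
    Finite.of_equiv (((Zsqrtd d ⧸ Iidl d g α β) ⧸ π.ker) × π.ker)
      (AddSubgroup.addGroupEquivQuotientProdAddSubgroup (s := π.ker)).symm
  refine ⟨finQ, ?_⟩
  show Nat.card (Zsqrtd d ⧸ Iidl d g α β) = Gn
  have hcard := AddSubgroup.card_eq_card_quotient_mul_card_addSubgroup π.ker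
  rw [hcard, Nat.card_congr e3.toEquiv, Nat.card_zmod,
    Nat.card_congr (e1.symm.trans e2).toEquiv, Nat.card_zmod]
  have : ((cn * a.natAbs : ℕ) : ℤ) = (Gn : ℤ) := by
    push_cast
    rw [Int.abs_eq_natAbs] at *
    rw [← Int.abs_eq_natAbs, abs_of_nonneg hapos]
    exact hca
  exact_mod_cast this
end
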